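/- If R is a right H-ring and a right max-ring, then every right R-module is a co-Kasch module. -/

import Mathlib

/-!
Let `S` be a simple subquotient of `M`, say `S ≤ M ⧸ K`, with injective hull `E(S)`. The map
`S ↪ E(S)` composed with the projection from the preimage of `S` extends to a nonzero
`f : M → E(S)`. By the max-ring property the nonzero module `f(M)` has a simple quotient `T`;
extending `f(M) → T ↪ E(T)` along `f(M) ⊆ E(S)` gives a nonzero map `E(S) → E(T)`, so the
`H`-ring property forces `T ≅ S`, and `M → f(M) → T ≅ S` is the required epimorphism.

Injective hulls are built in the classical way: inside an injective `Q ⊇ A` take a maximal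
essential extension `E` of `A` and a submodule `N` maximal with `N ∩ E = 0`. Then `E` embeds
essentially in `Q ⧸ N`, the extension `Q ⧸ N → Q` of `E ↪ Q` is injective with image an essential
extension of `E`, hence equal to `E` by maximality; so `Q = E ⊕ N` and `E` is injective.
-/

def IsCoKasch (R : Type*) [Ring R] (M : Type*) [AddCommGroup M] [Module R M] : Prop :=
  ∀ (K : Submodule R M) (S : Submodule R (M ⧸ K)), IsSimpleModule R S →
    ∃ f : M →ₗ[R] S, Function.Surjective f

/-- `E` together with the embedding `i : S →ₗ[R] E` is an injective hull of `S`: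
`E` is injective and `i` is an essential monomorphism. -/
def IsInjectiveHull (R : Type*) [Ring R] {S E : Type*} [AddCommGroup S] [Module R S]
    [AddCommGroup E] [Module R E] (i : S →ₗ[R] E) : Prop :=
  Module.Injective R E ∧ Function.Injective i ∧
    ∀ N : Submodule R E, N ≠ ⊥ → N ⊓ LinearMap.range i ≠ ⊥

/-- `R` is a right `H`-ring: `Hom(E(S₁), E(S₂)) = 0` for all nonisomorphic
simple modules `S₁`, `S₂`. -/
def IsHRing (R : Type u) [Ring R] : Prop :=
  ∀ (S₁ S₂ E₁ E₂ : Type u) [AddCommGroup S₁] [Module R S₁] [AddCommGroup S₂] [Module R S₂]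
    [AddCommGroup E₁] [Module R E₁] [AddCommGroup E₂] [Module R E₂],
    IsSimpleModule R S₁ → IsSimpleModule R S₂ → IsEmpty (S₁ ≃ₗ[R] S₂) →
    ∀ (i₁ : S₁ →ₗ[R] E₁) (i₂ : S₂ →ₗ[R] E₂),
      IsInjectiveHull R i₁ → IsInjectiveHull R i₂ →
      ∀ f : E₁ →ₗ[R] E₂, f = 0

theorem exists_maximal_disjoint {α : Type*} [CompleteLattice α] [IsCompactlyGenerated α] (a : α) :
    ∃ b, Maximal (Disjoint · a) b := by
  obtain ⟨b, -, hb⟩ := zorn_le_nonempty₀ {b | Disjoint b a}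
    (fun c hc hchain _ _ => ⟨sSup c, hchain.directedOn.disjoint_sSup_left.mpr hc,
      fun _ => le_sSup⟩) ⊥ disjoint_bot_left
  exact ⟨b, hb⟩

namespace Submodule

variable {R M M₂ : Type*} [Ring R] [AddCommGroup M] [Module R M] [AddCommGroup M₂] [Module R M₂]

def IsEssentialIn (A E : Submodule R M) : Prop :=
  A ≤ E ∧ ∀ P ≤ E, Disjoint P A → P = ⊥

theorem isEssentialIn_iff_span_singleton {A E : Submodule R M} :
    IsEssentialIn A E ↔ A ≤ E ∧ ∀ x ∈ E, Disjoint (R ∙ x) A → x = 0 := by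
  refine and_congr_right fun _ => ⟨fun h x hx hdis => ?_, fun h P hP hdis => ?_⟩
  · exact span_singleton_eq_bot.mp (h _ (span_singleton_le_iff_mem x E |>.mpr hx) hdis)
  · refine (Submodule.eq_bot_iff P).mpr fun x hx => h x (hP hx) ?_
    exact hdis.mono_left ((span_singleton_le_iff_mem x P).mpr hx)

theorem IsEssentialIn.refl (A : Submodule R M) : IsEssentialIn A A :=
  ⟨le_rfl, fun _ hP hdis => hdis.eq_bot_of_le hP⟩

theorem IsEssentialIn.trans {A B C : Submodule R M} (hAB : IsEssentialIn A B)
    (hBC : IsEssentialIn B C) : IsEssentialIn A C := by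
  refine ⟨hAB.1.trans hBC.1, fun P hP hdis => hBC.2 P hP (disjoint_iff.mpr ?_)⟩
  exact hAB.2 _ inf_le_right (hdis.mono_left inf_le_left)

theorem IsEssentialIn.map {A B : Submodule R M} (h : IsEssentialIn A B) {f : M →ₗ[R] M₂}
    (hf : Function.Injective f) : IsEssentialIn (A.map f) (B.map f) := by
  refine ⟨map_mono h.1, fun P hP hdis => ?_⟩
  have hPf : P ≤ LinearMap.range f := hP.trans LinearMap.map_le_range
  have hcomap : comap f P = ⊥ := by
    refine h.2 _ ((comap_mono hP).trans (comap_map_eq_of_injective hf B).le) ?_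
    rw [disjoint_def]
    intro x hxP hxA
    exact hf (by simpa using disjoint_def.mp hdis (f x) hxP (mem_map_of_mem hxA))
  rw [← map_comap_eq_of_le hPf, hcomap, map_bot]

theorem IsEssentialIn.comap_subtype {A E : Submodule R M} (h : IsEssentialIn A E) :
    IsEssentialIn (A.comap E.subtype) ⊤ := by
  refine ⟨le_top, fun P _ hdis => ?_⟩
  have hmap : P.map E.subtype = ⊥ := by
    refine h.2 _ (map_subtype_le E P) (disjoint_def.mpr ?_)
    rintro _ ⟨x, hxP, rfl⟩ hxA
    simpa using disjoint_def.mp hdis x hxP hxA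
  exact map_injective_of_injective E.injective_subtype (by rw [hmap, map_bot])

theorem exists_maximal_isEssentialIn (A : Submodule R M) :
    ∃ E, Maximal (IsEssentialIn A) E := by
  obtain ⟨E, -, hE⟩ := zorn_le_nonempty₀ {E | IsEssentialIn A E} (fun c hc hchain E' hE' => by
    refine ⟨sSup c, isEssentialIn_iff_span_singleton.mpr ⟨(hc hE').1.trans (le_sSup hE'),
      fun x hx hdis => ?_⟩, fun _ => le_sSup⟩
    obtain ⟨F, hF, hxF⟩ := (mem_sSup_of_directed ⟨E', hE'⟩ hchain.directedOn).mp hx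
    exact (isEssentialIn_iff_span_singleton.mp (hc hF)).2 x hxF hdis) A (.refl A)
  exact ⟨E, hE⟩

theorem isEssentialIn_map_mkQ_top_of_maximal_disjoint {E N : Submodule R M}
    (hN : Maximal (Disjoint · E) N) : IsEssentialIn (E.map N.mkQ) ⊤ := by
  refine ⟨le_top, fun P _ hdis => ?_⟩
  have hle : comap N.mkQ P ≤ N := by
    refine hN.2 (disjoint_def.mpr fun x hxP hxE => ?_)
      (by simpa using LinearMap.ker_le_comap (f := N.mkQ) (p := P))
    have hxN : x ∈ N :=
      (Quotient.mk_eq_zero N).mp (disjoint_def.mp hdis _ hxP (mem_map_of_mem hxE))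
    exact disjoint_def.mp hN.1 x hxN hxE
  rw [← map_comap_eq_of_surjective N.mkQ_surjective P, ← le_bot_iff, ← mkQ_map_self N]
  exact map_mono hle

theorem isCompl_of_maximal_isEssentialIn [Module.Injective R M] {A E N : Submodule R M}
    (hE : Maximal (IsEssentialIn A) E) (hN : Maximal (Disjoint · E) N) : IsCompl E N := by
  set π : E →ₗ[R] M ⧸ N := N.mkQ ∘ₗ E.subtype
  have hπ : Function.Injective π := by
    rw [← LinearMap.ker_eq_bot, LinearMap.ker_comp, ker_mkQ, ← disjoint_iff_comap_eq_bot]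
    exact hN.1.symm
  have hrange_π : LinearMap.range π = E.map N.mkQ := by
    rw [LinearMap.range_comp, range_subtype]
  obtain ⟨h, hh⟩ := Module.Injective.out π hπ E.subtype
  have hh_comp : h ∘ₗ π = E.subtype := LinearMap.ext hh
  have hess : IsEssentialIn (LinearMap.range π) ⊤ :=
    hrange_π ▸ isEssentialIn_map_mkQ_top_of_maximal_disjoint hN
  have h_inj : Function.Injective h := by
    refine LinearMap.ker_eq_bot.mp (hess.2 _ le_top (disjoint_def.mpr ?_))
    rintro _ hx ⟨e, rfl⟩
    have : e = 0 := Subtype.ext ((hh e).symm.trans hx)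
    simp [this]
  have hE_ess : IsEssentialIn E (LinearMap.range h) := by
    simpa [← LinearMap.range_comp, hh_comp, ← LinearMap.range_eq_map] using hess.map h_inj
  have hrange_h : LinearMap.range h ≤ E := hE.2 (hE.1.trans hE_ess) hE_ess.1
  have hπ_surj : Function.Surjective π := fun y =>
    ⟨⟨h y, hrange_h ⟨y, rfl⟩⟩, h_inj (hh _)⟩
  refine ⟨hN.1.symm, codisjoint_iff.mpr ?_⟩
  rw [sup_comm, ← map_mkQ_eq_top, ← hrange_π, LinearMap.range_eq_top]
  exact hπ_surj

end Submodule

theorem Module.Injective.of_isCompl {R Q : Type*} [Ring R] [AddCommGroup Q] [Module R Q]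
    [Module.Injective R Q] {E N : Submodule R Q} (h : IsCompl E N) : Module.Injective R E where
  out _ _ _ _ _ _ f hf g := by
    obtain ⟨g', hg'⟩ := Module.Injective.out f hf (E.subtype ∘ₗ g)
    exact ⟨E.projectionOnto N h ∘ₗ g', fun x => by simp [hg']⟩

theorem exists_injective_linearMap_to_injective (R : Type u) [Ring R] (A : Type u)
    [AddCommGroup A] [Module R A] :
    ∃ (Q : Type u) (_ : AddCommGroup Q) (_ : Module R Q) (_ : Module.Injective R Q)
      (ι : A →ₗ[R] Q), Function.Injective ι := by
  open CategoryTheory in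
  let I : ModuleCat R := Injective.under (ModuleCat.of R A)
  have : Injective (ModuleCat.of R I) := by rw [ModuleCat.of_coe]; infer_instance
  exact ⟨I, _, _, Module.injective_module_of_injective_object R I,
    (Injective.ι (ModuleCat.of R A)).hom, (ModuleCat.mono_iff_injective _).mp inferInstance⟩

theorem exists_isInjectiveHull (R : Type u) [Ring R] (A : Type u) [AddCommGroup A] [Module R A] :
    ∃ (E : Type u) (_ : AddCommGroup E) (_ : Module R E) (i : A →ₗ[R] E), IsInjectiveHull R i := by
  obtain ⟨Q, _, _, _, ι, hι⟩ := exists_injective_linearMap_to_injective R A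
  obtain ⟨E, hE⟩ := (LinearMap.range ι).exists_maximal_isEssentialIn
  obtain ⟨N, hN⟩ := exists_maximal_disjoint E
  have hAE : ∀ a, ι a ∈ E := fun a => hE.1.1 ⟨a, rfl⟩
  refine ⟨E, _, _, ι.codRestrict E hAE,
    Module.Injective.of_isCompl (Submodule.isCompl_of_maximal_isEssentialIn hE hN),
    fun a b hab => hι (congrArg Subtype.val hab), fun P hP hdis => hP ?_⟩
  rw [LinearMap.range_codRestrict] at hdis
  exact hE.1.comap_subtype.2 P le_top (disjoint_iff.mpr hdis)

theorem IsHRing.nonempty_linearEquiv {R : Type u} [Ring R] (hH : IsHRing R)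
    {S E X T : Type u} [AddCommGroup S] [Module R S] [AddCommGroup E] [Module R E]
    [AddCommGroup X] [Module R X] [AddCommGroup T] [Module R T]
    [IsSimpleModule R S] [IsSimpleModule R T] {i : S →ₗ[R] E} (hi : IsInjectiveHull R i)
    (j : X →ₗ[R] E) (hj : Function.Injective j) (p : X →ₗ[R] T) (hp : Function.Surjective p) :
    Nonempty (S ≃ₗ[R] T) := by
  by_contra hST
  obtain ⟨E', _, _, i', hi'⟩ := exists_isInjectiveHull R T
  obtain ⟨g, hg⟩ := hi'.1.out j hj (i' ∘ₗ p)
  have hg0 : g = 0 := hH S T E E' ‹_› ‹_› (not_nonempty_iff.mp hST) i i' hi hi' g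
  have := IsSimpleModule.nontrivial R T
  obtain ⟨t, ht⟩ := exists_ne (0 : T)
  obtain ⟨x, rfl⟩ := hp t
  exact ht (hi'.2.1 (by simpa [hg0] using (hg x).symm))

theorem exists_ne_zero_of_subquotient {R : Type*} {M E : Type v} [Ring R] [AddCommGroup M]
    [Module R M] [AddCommGroup E] [Module R E] [Module.Injective R E] (K : Submodule R M)
    (S : Submodule R (M ⧸ K)) [Nontrivial S] {i : S →ₗ[R] E} (hi : Function.Injective i) :
    ∃ f : M →ₗ[R] E, f ≠ 0 := by
  let P := S.comap K.mkQ
  let q : P →ₗ[R] S := K.mkQ.restrict fun _ hx => hx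
  obtain ⟨f, hf⟩ := Module.Injective.out P.subtype P.injective_subtype (i ∘ₗ q)
  refine ⟨f, fun hf0 => ?_⟩
  obtain ⟨⟨s, hs⟩, hs0⟩ := exists_ne (0 : S)
  obtain ⟨m, rfl⟩ := K.mkQ_surjective s
  exact hs0 (hi (by simpa [hf0, q, LinearMap.restrict_apply] using (hf ⟨m, hs⟩).symm))

theorem stmt10 (R : Type u) [Ring R] (hH : IsHRing R)
    (hmax : ∀ (M : Type u) [AddCommGroup M] [Module R M], Nontrivial M →
      ∃ N : Submodule R M, IsCoatom N) :
    ∀ (M : Type u) [AddCommGroup M] [Module R M], IsCoKasch R M := by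
  intro M _ _ K S hS
  obtain ⟨E, _, _, i, hi⟩ := exists_isInjectiveHull R S
  have := hi.1
  have := IsSimpleModule.nontrivial R S
  obtain ⟨f, hf⟩ := exists_ne_zero_of_subquotient K S hi.2.1
  obtain ⟨N, hN⟩ := hmax (LinearMap.range f)
    (Submodule.nontrivial_iff_ne_bot.mpr (LinearMap.range_eq_bot.not.mpr hf))
  have := isSimpleModule_iff_isCoatom.mpr hN
  obtain ⟨e⟩ := hH.nonempty_linearEquiv hi (LinearMap.range f).subtype
    (LinearMap.range f).injective_subtype N.mkQ N.mkQ_surjective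
  exact ⟨e.symm ∘ₗ N.mkQ ∘ₗ f.rangeRestrict,
    e.symm.surjective.comp (N.mkQ_surjective.comp f.surjective_rangeRestrict)⟩
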